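/- For any ε ∈ (0,1), β_n(ε) ≤ exp(-n·(D(P‖Q) - C_X(P,Q)·√(2 ln(1/ε)/n))) for every n ≥ 1; i.e., there exists a test with Type I error at most ε and Type II error bounded by this explicit exponential quantity. -/

import Mathlib

open Finset Filter Real
open scoped BigOperators Classical ENNReal

/-- The n-fold product (i.i.d.) probability mass function on `Fin n → X`. -/
noncomputable def prodP {X : Type*} [Fintype X] (P : X → ℝ) (n : ℕ) (x : Fin n → X) : ℝ :=
  ∏ i, P (x i)

/-- Kullback–Leibler divergence (natural logarithm). -/
noncomputable def KL {X : Type*} [Fintype X] (P Q : X → ℝ) : ℝ :=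
  ∑ x, P x * Real.log (P x / Q x)

/-- `C_X(P,Q) = sup_{x : P(x) > 0} |log (P(x)/Q(x))|`. -/
noncomputable def Cx {X : Type*} [Fintype X] (P Q : X → ℝ) : ℝ :=
  ⨆ x : {x : X // 0 < P x}, |Real.log (P x.1 / Q x.1)|

/-- Minimal Type II error probability under a Type I error constraint `ε`. -/
noncomputable def beta {X : Type*} [Fintype X] [DecidableEq X] (P Q : X → ℝ) (n : ℕ)
    (ε : ℝ) : ℝ :=
  sInf {b : ℝ | ∃ A : Finset (Fin n → X),
    (∑ x ∈ Aᶜ, prodP P n x) ≤ ε ∧ b = ∑ x ∈ A, prodP Q n x}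

/-!
Use the likelihood-ratio test accepting `x` when `P^n(x) ≥ e^γ Q^n(x)`: its Type II error is at
most `e^{-γ}`, since `Q^n ≤ e^{-γ} P^n` on the acceptance region. Its Type I error is the probability
that the i.i.d. sum of the log-likelihood ratios, each of mean `D(P‖Q)` and bounded by `C_X(P,Q)`,
drops below `γ`. Chernoff's bound together with Hoeffding's lemma bounds it by
`exp(-(nD - γ)² / (2 n C²))`, which is `ε` for `γ = n (D - C √(2 ln(1/ε)/n))`.
-/

open MeasureTheory ProbabilityTheory in
/-- Hoeffding's lemma for a finitely supported distribution `p`. -/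
theorem sum_mul_exp_le_of_abs_le {X : Type*} [Fintype X] {p f : X → ℝ} {C : ℝ}
    (hp0 : ∀ x, 0 ≤ p x) (hp1 : ∑ x, p x = 1) (hf : ∀ x, 0 < p x → |f x| ≤ C) (t : ℝ) :
    ∑ x, p x * exp (t * f x) ≤ exp (t * ∑ x, p x * f x + C ^ 2 * t ^ 2 / 2) := by
  let _ : MeasurableSpace X := ⊤
  have : MeasurableSingletonClass X := ⟨fun _ => trivial⟩
  let μ := (PMF.ofFintype (fun x => ENNReal.ofReal (p x))
    (by rw [← ENNReal.ofReal_sum_of_nonneg fun x _ => hp0 x, hp1, ENNReal.ofReal_one])).toMeasure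
  have integral_eq (g : X → ℝ) : ∫ x, g x ∂μ = ∑ x, p x * g x := by
    simp [μ, PMF.integral_eq_sum, ENNReal.toReal_ofReal (hp0 _)]
  have hbound : ∀ᵐ x ∂μ, f x ∈ Set.Icc (-C) C := by
    refine ae_iff_of_countable.2 fun x hx => abs_le.1 (hf x ?_)
    simpa [μ, PMF.toMeasure_apply_singleton] using hx
  have hoeffding := (hasSubgaussianMGF_of_mem_Icc .of_discrete hbound).mgf_le t
  simp only [mgf, integral_eq] at hoeffding
  have hparam : ((‖C - -C‖₊ / 2) ^ 2 : NNReal) = (C ^ 2 : ℝ) := by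
    simp [sub_neg_eq_add, ← two_mul, sq_abs]
  rw [hparam] at hoeffding
  calc ∑ x, p x * exp (t * f x)
      = exp (t * ∑ x, p x * f x) * ∑ x, p x * exp (t * (f x - ∑ y, p y * f y)) := by
        rw [mul_sum]
        refine sum_congr rfl fun x _ => ?_
        rw [mul_sub, exp_sub]
        field_simp
    _ ≤ exp (t * ∑ x, p x * f x) * exp (C ^ 2 * t ^ 2 / 2) := by gcongr
    _ = _ := (exp_add _ _).symm

section

variable {X : Type*} [Fintype X] {P Q : X → ℝ} {n : ℕ}

theorem prodP_nonneg (hP0 : ∀ x, 0 ≤ P x) (x : Fin n → X) : 0 ≤ prodP P n x :=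
  prod_nonneg fun i _ => hP0 (x i)

theorem sum_prod_apply_eq_pow (g : X → ℝ) :
    ∑ x : Fin n → X, ∏ i, g (x i) = (∑ y, g y) ^ n := by
  rw [sum_pow', Fintype.piFinset_univ]

theorem sum_prodP (P : X → ℝ) : ∑ x, prodP P n x = (∑ y, P y) ^ n :=
  sum_prod_apply_eq_pow P

theorem prodP_eq_prodP_mul_exp_sum_log_div {x : Fin n → X} (hP : ∀ i, 0 < P (x i))
    (hQ : ∀ i, 0 < Q (x i)) :
    prodP P n x = prodP Q n x * exp (∑ i, log (P (x i) / Q (x i))) := by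
  rw [prodP, prodP, exp_sum, ← prod_mul_distrib]
  refine prod_congr rfl fun i _ => ?_
  rw [exp_log (div_pos (hP i) (hQ i)), mul_div_cancel₀ _ (hQ i).ne']

/-- Chernoff's bound for the lower tail of `∑ i, L (x i)` under `P^n`. -/
theorem sum_prodP_le_of_sum_lt {L : X → ℝ} (hP0 : ∀ x, 0 ≤ P x) {S : Finset (Fin n → X)}
    {γ t : ℝ} (ht : 0 ≤ t) (hS : ∀ x ∈ S, 0 < prodP P n x → ∑ i, L (x i) < γ) :
    ∑ x ∈ S, prodP P n x ≤ exp (t * γ) * (∑ y, P y * exp (-t * L y)) ^ n := by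
  have term_nonneg (x : Fin n → X) : 0 ≤ exp (t * γ) * ∏ i, (P (x i) * exp (-t * L (x i))) :=
    mul_nonneg (exp_pos _).le (prod_nonneg fun i _ => mul_nonneg (hP0 _) (exp_pos _).le)
  calc ∑ x ∈ S, prodP P n x
      ≤ ∑ x ∈ S, exp (t * γ) * ∏ i, (P (x i) * exp (-t * L (x i))) := by
        refine sum_le_sum fun x hx => ?_
        rcases (prodP_nonneg hP0 x).eq_or_lt with h | h
        · exact h ▸ term_nonneg x
        have : 1 ≤ exp (t * (γ - ∑ i, L (x i))) :=
          one_le_exp (mul_nonneg ht (sub_nonneg.2 (hS x hx h).le))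
        calc prodP P n x ≤ prodP P n x * exp (t * (γ - ∑ i, L (x i))) :=
              le_mul_of_one_le_right h.le this
          _ = _ := by
              rw [prod_mul_distrib, ← exp_sum, ← prodP, mul_left_comm, ← exp_add, ← mul_sum]
              ring_nf
    _ ≤ ∑ x : Fin n → X, exp (t * γ) * ∏ i, (P (x i) * exp (-t * L (x i))) :=
        sum_le_sum_of_subset_of_nonneg (subset_univ S) fun x _ _ => term_nonneg x
    _ = exp (t * γ) * (∑ y, P y * exp (-t * L y)) ^ n := by
        rw [← mul_sum, sum_prod_apply_eq_pow fun y => P y * exp (-t * L y)]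

theorem abs_log_div_le_Cx {x : X} (hx : 0 < P x) : |log (P x / Q x)| ≤ Cx P Q :=
  le_ciSup (f := fun x : {x // 0 < P x} => |log (P x.1 / Q x.1)|) (Set.finite_range _).bddAbove
    ⟨x, hx⟩

theorem KL_le_Cx (hP0 : ∀ x, 0 ≤ P x) (hP1 : ∑ x, P x = 1) : KL P Q ≤ Cx P Q :=
  calc KL P Q ≤ ∑ x, P x * Cx P Q := by
        refine sum_le_sum fun x _ => ?_
        rcases (hP0 x).eq_or_lt with h | h
        · simp [← h]
        · exact mul_le_mul_of_nonneg_left ((le_abs_self _).trans (abs_log_div_le_Cx h)) h.le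
    _ = Cx P Q := by rw [← sum_mul, hP1, one_mul]

theorem beta_le [DecidableEq X] (hQ0 : ∀ x, 0 ≤ Q x) {ε : ℝ} (A : Finset (Fin n → X))
    (hA : ∑ x ∈ Aᶜ, prodP P n x ≤ ε) : beta P Q n ε ≤ ∑ x ∈ A, prodP Q n x :=
  csInf_le ⟨0, by
    rintro _ ⟨B, -, rfl⟩
    exact sum_nonneg fun x _ => prodP_nonneg hQ0 x⟩ ⟨A, hA, rfl⟩

noncomputable def llrTest (P Q : X → ℝ) (n : ℕ) (γ : ℝ) : Finset (Fin n → X) :=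
  univ.filter fun x => exp γ * prodP Q n x ≤ prodP P n x

theorem sum_prodP_llrTest_le (hP0 : ∀ x, 0 ≤ P x) (hP1 : ∑ x, P x = 1) (γ : ℝ) :
    ∑ x ∈ llrTest P Q n γ, prodP Q n x ≤ exp (-γ) := by
  have hmass : ∑ x ∈ llrTest P Q n γ, prodP P n x ≤ 1 := by
    calc _ ≤ ∑ x, prodP P n x :=
          sum_le_sum_of_subset_of_nonneg (subset_univ _) fun x _ _ => prodP_nonneg hP0 x
      _ = 1 := by rw [sum_prodP, hP1, one_pow]
  calc ∑ x ∈ llrTest P Q n γ, prodP Q n x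
      ≤ ∑ x ∈ llrTest P Q n γ, exp (-γ) * prodP P n x := by
        refine sum_le_sum fun x hx => ?_
        rw [exp_neg, ← div_eq_inv_mul, le_div_iff₀' (exp_pos γ)]
        exact (mem_filter.1 hx).2
    _ ≤ exp (-γ) := by
        rw [← mul_sum]
        exact mul_le_of_le_one_right (exp_pos _).le hmass

theorem sum_prodP_compl_llrTest_le [DecidableEq X] (hP0 : ∀ x, 0 ≤ P x) (hP1 : ∑ x, P x = 1)
    (hQ0 : ∀ x, 0 ≤ Q x) (hac : ∀ x, Q x = 0 → P x = 0) {γ t : ℝ} (ht : 0 ≤ t) :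
    ∑ x ∈ (llrTest P Q n γ)ᶜ, prodP P n x
      ≤ exp (t * γ) * exp (-t * KL P Q + Cx P Q ^ 2 * t ^ 2 / 2) ^ n := by
  calc _ ≤ exp (t * γ) * (∑ y, P y * exp (-t * log (P y / Q y))) ^ n := by
        refine sum_prodP_le_of_sum_lt hP0 ht fun x hx hpos => ?_
        have hP : ∀ i, 0 < P (x i) := fun i =>
          (hP0 _).lt_of_ne fun h => hpos.ne' (prod_eq_zero (mem_univ i) h.symm)
        have hQ : ∀ i, 0 < Q (x i) := fun i =>
          (hQ0 _).lt_of_ne fun h => (hP i).ne' (hac _ h.symm)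
        have hrej : prodP P n x < exp γ * prodP Q n x := by
          simpa [llrTest] using hx
        rw [prodP_eq_prodP_mul_exp_sum_log_div hP hQ, mul_comm] at hrej
        exact exp_lt_exp.1 (lt_of_mul_lt_mul_right hrej (prodP_nonneg hQ0 x))
    _ ≤ exp (t * γ) * exp (-t * KL P Q + Cx P Q ^ 2 * t ^ 2 / 2) ^ n := by
        gcongr
        · exact sum_nonneg fun y _ => mul_nonneg (hP0 y) (exp_pos _).le
        · have := sum_mul_exp_le_of_abs_le (f := fun y => log (P y / Q y)) hP0 hP1
            (fun x hx => abs_log_div_le_Cx hx) (-t)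
          rwa [neg_sq] at this

end

theorem achievability_fixed_epsilon_general
    {X : Type*} [Fintype X] [DecidableEq X] (P Q : X → ℝ)
    (hP0 : ∀ x, 0 ≤ P x) (hP1 : ∑ x, P x = 1)
    (hQ0 : ∀ x, 0 ≤ Q x)
    (hac : ∀ x, Q x = 0 → P x = 0) (hD : 0 < KL P Q)
    (ε : ℝ) (hε0 : 0 < ε) (hε1 : ε < 1) (n : ℕ) (hn : 1 ≤ n) :
    beta P Q n ε
      ≤ Real.exp (-(n * (KL P Q - Cx P Q * Real.sqrt (2 * Real.log (1 / ε) / n)))) := by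
  set C := Cx P Q with hCdef
  set u := Real.sqrt (2 * Real.log (1 / ε) / n)
  have hC : 0 < C := hD.trans_le (KL_le_Cx hP0 hP1)
  have hn0 : (0 : ℝ) < n := by exact_mod_cast hn
  have hlog : 0 < log (1 / ε) := log_pos ((one_lt_div hε0).2 hε1)
  have hu : 0 < u := sqrt_pos.2 (by positivity)
  have hu2 : n * u ^ 2 = 2 * log (1 / ε) := by
    rw [sq_sqrt (by positivity)]
    field_simp
  set γ := n * (KL P Q - C * u) with hγ
  have htypeI : ∑ x ∈ (llrTest P Q n γ)ᶜ, prodP P n x ≤ ε := by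
    -- `u / C = (n D - γ) / (n C²)` is the optimal Chernoff parameter
    refine (sum_prodP_compl_llrTest_le hP0 hP1 hQ0 hac (div_pos hu hC).le).trans_eq ?_
    have hlogε : log ε = -(n * u ^ 2) / 2 := by rw [hu2, one_div, log_inv]; ring
    rw [← exp_nat_mul, ← exp_add, ← exp_log hε0, hlogε, hγ, ← hCdef]
    congr 1
    field_simp
    ring
  exact (beta_le hQ0 _ htypeI).trans (sum_prodP_llrTest_le hP0 hP1 γ)

theorem achievability_fixed_epsilon
    {X : Type*} [Fintype X] [DecidableEq X] (P Q : X → ℝ)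
    (hP0 : ∀ x, 0 ≤ P x) (hP1 : ∑ x, P x = 1)
    (hQ0 : ∀ x, 0 ≤ Q x) (hQ1 : ∑ x, Q x = 1)
    (hac : ∀ x, Q x = 0 → P x = 0) (hD : 0 < KL P Q)
    (ε : ℝ) (hε0 : 0 < ε) (hε1 : ε < 1) (n : ℕ) (hn : 1 ≤ n) :
    beta P Q n ε
      ≤ Real.exp (-(n * (KL P Q - Cx P Q * Real.sqrt (2 * Real.log (1 / ε) / n)))) :=
  achievability_fixed_epsilon_general P Q hP0 hP1 hQ0 hac hD ε hε0 hε1 n hn
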